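/- Given β₀, σ₀ ∈ (0,1), set γ₀ = (1−β₀)/100 and choose N₀ ∈ ℕ with σ₀^{N₀} ≤ (1−β₀)/100. Let f(z) = λz and g(z) = Λz with |λ| ≤ β₀|Λ| and |λ| ≤ σ₀, and let g̃ be a Möbius transformation whose inverse is a γ₀-deformation of g^{-1}(z)=Λ^{-1}z. Then for any r ∈ [0,1] such that g̃^{-1}(B(0,r)) is not contained in f^{-1}(B(0,r)), the sets f^{N₀}(B(0,r)) and g̃^{-1}(f^{N₀}(B(0,r))) are disjoint. -/

import Mathlib

/-!
Suppose `G(z) = (a z + b)/(c z + d)` sends some `z₀ ∈ B(0,r)` outside `B(0, r/|λ|)`. On the unit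
disk the denominator of `G` stays within `2γ₀` of `1` in modulus, and the numerator is affine with
slope `|a| ≈ |Λ|⁻¹ ≤ β₀/|λ|`, so on the tiny disk `B(0, |λ|^{N₀} r)` the numerator still has modulus
at least `r/|λ|` minus `|a|(r + |λ|^{N₀} r) ≈ β₀ r/|λ|`. Because `γ₀` and `|λ|^{N₀} ≤ γ₀` are
small compared with `1 - β₀`, this leaves every value of `G` there outside `B(0, |λ|^{N₀} r)`.
-/

open Metric Set

lemma abs_norm_mul_add_sub_one_le {R : Type*} [SeminormedRing R] {c d z : R} {γ : ℝ}
    (hc : ‖c‖ ≤ γ) (hd : |‖d‖ - 1| ≤ γ) (hz : ‖z‖ ≤ 1) : |‖c * z + d‖ - 1| ≤ 2 * γ := by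
  have hcz : ‖c * z‖ ≤ γ :=
    calc ‖c * z‖ ≤ ‖c‖ * ‖z‖ := norm_mul_le c z
      _ ≤ ‖c‖ := mul_le_of_le_one_right (norm_nonneg c) hz
      _ ≤ γ := hc
  have hshift : |‖c * z + d‖ - ‖d‖| ≤ ‖c * z‖ := by
    simpa using abs_norm_sub_norm_le (c * z + d) d
  calc |‖c * z + d‖ - 1| ≤ |‖c * z + d‖ - ‖d‖| + |‖d‖ - 1| := abs_sub_le _ _ _
    _ ≤ 2 * γ := by linarith

lemma norm_mul_add_le_norm_mul_add_add {R : Type*} [SeminormedRing R] (a b z w : R) :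
    ‖a * z + b‖ ≤ ‖a * w + b‖ + ‖a‖ * (‖z‖ + ‖w‖) :=
  calc ‖a * z + b‖ = ‖(a * w + b) + a * (z - w)‖ := by congr 1; noncomm_ring
    _ ≤ ‖a * w + b‖ + ‖a‖ * ‖z - w‖ := (norm_add_le _ _).trans (by gcongr; exact norm_mul_le _ _)
    _ ≤ ‖a * w + b‖ + ‖a‖ * (‖z‖ + ‖w‖) := by gcongr; exact norm_sub_le z w

lemma lt_norm_moebius_of_lt_norm_moebius {𝕜 : Type*} [NormedField 𝕜] {a b c d z w : 𝕜}
    {δ R s : ℝ} (hδ : δ < 1) (hz : |‖c * z + d‖ - 1| ≤ δ) (hw : |‖c * w + d‖ - 1| ≤ δ)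
    (hR : 0 ≤ R) (hfar : R < ‖(a * z + b) / (c * z + d)‖)
    (hmargin : s * (1 + δ) + ‖a‖ * (‖z‖ + ‖w‖) ≤ R * (1 - δ)) :
    s < ‖(a * w + b) / (c * w + d)‖ := by
  by_contra! hnear
  obtain ⟨hz_lo, -⟩ := abs_le.1 hz
  obtain ⟨hw_lo, hw_hi⟩ := abs_le.1 hw
  have hs : 0 ≤ s := (norm_nonneg _).trans hnear
  rw [norm_div] at hfar hnear
  rw [lt_div_iff₀ (by linarith)] at hfar
  rw [div_le_iff₀ (by linarith)] at hnear
  have hnum_z : R * (1 - δ) < ‖a * z + b‖ :=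
    (mul_le_mul_of_nonneg_left (by linarith) hR).trans_lt hfar
  have hnum_w : ‖a * w + b‖ ≤ s * (1 + δ) :=
    hnear.trans (mul_le_mul_of_nonneg_left (by linarith) hs)
  linarith [norm_mul_add_le_norm_mul_add_add a b z w]

lemma pow_mul_add_le_inv_mul {γ σ l L A r : ℝ} {N : ℕ} (hγ : 0 ≤ γ) (hγ1 : 100 * γ ≤ 1)
    (hl : 0 < l) (hlσ : l ≤ σ) (hσ : σ ≤ 1) (hN : σ ^ N ≤ γ) (hlL : l ≤ (1 - 100 * γ) * L)
    (hA : 0 ≤ A) (hAL : A * L ≤ 1 + γ) (hr : 0 ≤ r) :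
    l ^ N * r * (1 + 2 * γ) + A * (r + l ^ N * r) ≤ l⁻¹ * r * (1 - 2 * γ) := by
  have hp0 : 0 ≤ l ^ N := by positivity
  have hp : l ^ N ≤ γ := (pow_le_pow_left₀ hl.le hlσ N).trans hN
  have hpl : l ^ N * l ≤ γ := by nlinarith
  have hAl : A * l ≤ (1 - 100 * γ) * (1 + γ) :=
    calc A * l ≤ A * ((1 - 100 * γ) * L) := mul_le_mul_of_nonneg_left hlL hA
      _ = (1 - 100 * γ) * (A * L) := by ring
      _ ≤ (1 - 100 * γ) * (1 + γ) := mul_le_mul_of_nonneg_left hAL (by linarith)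
  have hAl' : A * l * (1 + l ^ N) ≤ (1 - 100 * γ) * (1 + γ) * (1 + γ) :=
    mul_le_mul hAl (by linarith) (by positivity) (by nlinarith)
  have hcore : l ^ N * l * (1 + 2 * γ) + A * l * (1 + l ^ N) ≤ 1 - 2 * γ := by
    have hpl' := mul_le_mul_of_nonneg_right hpl (by linarith : (0 : ℝ) ≤ 1 + 2 * γ)
    -- `(1 + 2γ)γ + (1 - 100γ)(1 + γ)² = 1 - 97γ - 197γ² - 100γ³`
    nlinarith [mul_nonneg (mul_nonneg hγ hγ) hγ]
  calc l ^ N * r * (1 + 2 * γ) + A * (r + l ^ N * r)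
      = l⁻¹ * r * (l ^ N * l * (1 + 2 * γ) + A * l * (1 + l ^ N)) := by field_simp
    _ ≤ l⁻¹ * r * (1 - 2 * γ) := mul_le_mul_of_nonneg_left hcore (by positivity)

theorem stmt6_general (β₀ σ₀ : ℝ) (hβ : β₀ ∈ Set.Ioo (0:ℝ) 1) (hσ : σ₀ ∈ Set.Ioo (0:ℝ) 1)
    (N₀ : ℕ) (hN : σ₀ ^ N₀ ≤ (1 - β₀) / 100)
    (lam Lam a b c d : ℂ) (hlam : lam ≠ 0)
    (h1 : ‖lam‖ ≤ β₀ * ‖Lam‖) (h2 : ‖lam‖ ≤ σ₀)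
    (hdefa : |‖a‖ / ‖Lam‖⁻¹ - 1| < (1 - β₀) / 100)
    (hdefc : ‖c‖ < (1 - β₀) / 100)
    (hdefd : |‖d‖ - 1| < (1 - β₀) / 100)
    (r : ℝ) (hr : r ∈ Set.Icc (0:ℝ) 1)
    (hnot : ¬ ((fun z : ℂ => (a * z + b) / (c * z + d)) '' Metric.closedBall 0 r
        ⊆ Metric.closedBall 0 (‖lam‖⁻¹ * r))) :
    Disjoint
      (Metric.closedBall (0:ℂ) (‖lam‖ ^ N₀ * r))
      ((fun z : ℂ => (a * z + b) / (c * z + d)) ''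
        Metric.closedBall (0:ℂ) (‖lam‖ ^ N₀ * r)) := by
  set γ := (1 - β₀) / 100 with hγ
  obtain ⟨z₀, hz₀, hfar⟩ : ∃ z₀ ∈ closedBall (0 : ℂ) r,
      ‖lam‖⁻¹ * r < ‖(a * z₀ + b) / (c * z₀ + d)‖ := by
    simpa [subset_def] using hnot
  have hl : 0 < ‖lam‖ := norm_pos_iff.mpr hlam
  have hs_le_r : ‖lam‖ ^ N₀ * r ≤ r :=
    mul_le_of_le_one_left hr.1 (pow_le_one₀ hl.le (h2.trans hσ.2.le))
  have hden {z : ℂ} (hz : ‖z‖ ≤ r) : |‖c * z + d‖ - 1| ≤ 2 * γ :=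
    abs_norm_mul_add_sub_one_le hdefc.le hdefd.le (hz.trans hr.2)
  rw [disjoint_left]
  rintro _ hnear ⟨u, hu, rfl⟩
  rw [mem_closedBall_zero_iff] at hz₀ hu hnear
  refine (lt_norm_moebius_of_lt_norm_moebius (by linarith [hβ.1]) (hden hz₀)
    (hden (hu.trans hs_le_r)) (mul_nonneg (inv_nonneg.2 hl.le) hr.1) hfar ?_).not_ge hnear
  have hAL : ‖a‖ * ‖Lam‖ ≤ 1 + γ := by
    rw [div_inv_eq_mul] at hdefa; linarith [(abs_lt.1 hdefa).2]
  calc ‖lam‖ ^ N₀ * r * (1 + 2 * γ) + ‖a‖ * (‖z₀‖ + ‖u‖)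
      ≤ ‖lam‖ ^ N₀ * r * (1 + 2 * γ) + ‖a‖ * (r + ‖lam‖ ^ N₀ * r) := by gcongr
    _ ≤ ‖lam‖⁻¹ * r * (1 - 2 * γ) :=
      pow_mul_add_le_inv_mul (by linarith [hβ.2]) (by linarith [hβ.1]) hl h2 hσ.2.le hN
        (h1.trans_eq (by rw [hγ]; ring)) (norm_nonneg a) hAL hr.1

/-- Lemma `l.aproximacao2`: if `G = g̃⁻¹` is a `γ₀`-deformation of `g⁻¹(z)=Λ⁻¹z`,
`|λ| ≤ β₀|Λ|`, `|λ| ≤ σ₀`, `γ₀ = (1−β₀)/100`, `σ₀^{N₀} ≤ (1−β₀)/100`, and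
`g̃⁻¹(B(0,r)) ⊄ f⁻¹(B(0,r))` for some `r ∈ [0,1]` (where `f(z)=λz`), then
`f^{N₀}(B(0,r)) = B(0,|λ|^{N₀}r)` and `g̃⁻¹(f^{N₀}(B(0,r)))` are disjoint. -/
theorem stmt6 (β₀ σ₀ : ℝ) (hβ : β₀ ∈ Set.Ioo (0:ℝ) 1) (hσ : σ₀ ∈ Set.Ioo (0:ℝ) 1)
    (N₀ : ℕ) (hN : σ₀ ^ N₀ ≤ (1 - β₀) / 100)
    (lam Lam a b c d : ℂ) (hlam : lam ≠ 0) (hLam : Lam ≠ 0)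
    (h1 : ‖lam‖ ≤ β₀ * ‖Lam‖) (h2 : ‖lam‖ ≤ σ₀)
    (hdefa : |‖a‖ / ‖Lam‖⁻¹ - 1| < (1 - β₀) / 100)
    (hdefb : ‖b‖ < (1 - β₀) / 100)
    (hdefc : ‖c‖ < (1 - β₀) / 100)
    (hdefd : |‖d‖ - 1| < (1 - β₀) / 100)
    (r : ℝ) (hr : r ∈ Set.Icc (0:ℝ) 1)
    (hnot : ¬ ((fun z : ℂ => (a * z + b) / (c * z + d)) '' Metric.closedBall 0 r
        ⊆ Metric.closedBall 0 (‖lam‖⁻¹ * r))) :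
    Disjoint
      (Metric.closedBall (0:ℂ) (‖lam‖ ^ N₀ * r))
      ((fun z : ℂ => (a * z + b) / (c * z + d)) ''
        Metric.closedBall (0:ℂ) (‖lam‖ ^ N₀ * r)) :=
  stmt6_general β₀ σ₀ hβ hσ N₀ hN lam Lam a b c d hlam h1 h2 hdefa hdefc hdefd r hr hnot
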